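/- arXiv:2101.02042 — 2 statements merged into one kernel-verified Lean document; each statement's English description precedes it below -/
import Mathlib

section
/- Let X be a connected, locally finite simple graph with vertex set V and graph distance d, let α ≥ 1 and β ≥ 0 be real constants, and let f : V → ℤ satisfy α⁻¹·d(u,v) − β ≤ |f(u) − f(v)| ≤ α·d(u,v) + β for all u, v ∈ V. Let Y = {x ∈ V : f(x) ≥ 0}. Then the boundary ∂Y is contained in the set {x ∈ V : 0 ≤ f(x) ≤ α + β − 1}, and in particular ∂Y is finite. -/
/-- The boundary of a set `A` of vertices: the vertices of `A` adjacent to some vertex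
outside of `A`. -/
def graphBoundary {V : Type*} (X : SimpleGraph V) (A : Set V) : Set V :=
  {x ∈ A | ∃ y ∉ A, X.Adj x y}

lemma ball_finite {V : Type*} (X : SimpleGraph V) (hconn : X.Connected)
    (hlf : ∀ v : V, (X.neighborSet v).Finite) (v0 : V) :
    ∀ n : ℕ, {x : V | X.dist v0 x ≤ n}.Finite := by
  intro n
  induction n with
  | zero =>
      apply Set.Finite.subset (Set.finite_singleton v0)
      intro x hx
      simp only [Set.mem_setOf_eq, Nat.le_zero] at hx
      exact (hconn.dist_eq_zero_iff.mp hx).symm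
  | succ n ih =>
      apply Set.Finite.subset (ih.union (Set.Finite.biUnion ih fun y _ => hlf y))
      intro x hx
      simp only [Set.mem_setOf_eq] at hx
      rcases Nat.lt_or_ge (X.dist v0 x) (n + 1) with hlt | hge
      · exact Or.inl (Nat.lt_succ_iff.mp hlt)
      · have hd : X.dist v0 x = n + 1 := le_antisymm hx hge
        obtain ⟨p, hp⟩ := hconn.exists_walk_length_eq_dist x v0
        have hq : p.length = n + 1 := by
          rw [hp, SimpleGraph.dist_comm, hd]
        obtain ⟨y, hadj, hy⟩ : ∃ y, X.Adj x y ∧ X.dist v0 y ≤ n := by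
          cases p with
          | nil => simp at hq
          | cons hadj q =>
            refine ⟨_, hadj, ?_⟩
            have hql : q.length = n := by simpa using hq
            calc X.dist v0 _ = X.dist _ v0 := SimpleGraph.dist_comm ..
              _ ≤ q.length := SimpleGraph.dist_le q
              _ = n := hql
        exact Or.inr (Set.mem_biUnion hy hadj.symm)

/-- With `Y = {x : f x ≥ 0}`, the boundary `∂Y` is contained in
`{x : 0 ≤ f x ≤ α + β − 1}`, and in particular it is finite. -/
theorem boundary_of_nonneg_part {V : Type*} (X : SimpleGraph V)
    (hconn : X.Connected) (hlf : ∀ v : V, (X.neighborSet v).Finite)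
    (α β : ℝ) (hα : 1 ≤ α) (hβ : 0 ≤ β) (f : V → ℤ)
    (hf : ∀ u v : V, α⁻¹ * (X.dist u v : ℝ) - β ≤ (|f u - f v| : ℝ) ∧
        (|f u - f v| : ℝ) ≤ α * (X.dist u v : ℝ) + β) :
    graphBoundary X {x : V | 0 ≤ f x} ⊆ {x : V | 0 ≤ f x ∧ (f x : ℝ) ≤ α + β - 1} ∧
      (graphBoundary X {x : V | 0 ≤ f x}).Finite := by
  have hsub : graphBoundary X {x : V | 0 ≤ f x} ⊆
      {x : V | 0 ≤ f x ∧ (f x : ℝ) ≤ α + β - 1} := by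
    rintro x ⟨hx, y, hy, hadj⟩
    simp only [Set.mem_setOf_eq] at hx hy ⊢
    refine ⟨hx, ?_⟩
    have hd : X.dist x y = 1 := SimpleGraph.dist_eq_one_iff_adj.mpr hadj
    have hub := (hf x y).2
    rw [hd] at hub
    push_neg at hy
    have habs : |f x - f y| = f x - f y := abs_of_nonneg (by omega)
    have h1 : (f x : ℝ) + 1 ≤ |f x - f y| := by
      rw [habs]; push_cast; have : f y ≤ -1 := by omega
      have : (f y : ℝ) ≤ -1 := by exact_mod_cast this
      linarith
    have : (|f x - f y| : ℝ) ≤ α + β := by push_cast at hub ⊢; linarith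
    push_cast at h1
    linarith
  refine ⟨hsub, ?_⟩
  obtain ⟨v0⟩ := hconn.nonempty
  have hα0 : (0:ℝ) < α := lt_of_lt_of_le one_pos hα
  -- bound distance from v0 for boundary points
  obtain ⟨n, hn⟩ := exists_nat_ge (α * ((α + β - 1 + |(f v0 : ℝ)|) + β))
  set C : ℝ := α + β - 1 + |(f v0 : ℝ)| with hC
  apply Set.Finite.subset (ball_finite X hconn hlf v0 n)
  intro x hx
  obtain ⟨hx0, hxle⟩ := hsub hx
  simp only [Set.mem_setOf_eq]
  have hlb := (hf v0 x).1
  have habs : (|(f v0 : ℝ) - (f x : ℝ)|) ≤ C := by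
    have h1 : |(f v0 : ℝ) - (f x : ℝ)| ≤ |(f v0 : ℝ)| + |(f x : ℝ)| := abs_sub _ _
    have h2 : |(f x : ℝ)| = (f x : ℝ) :=
      abs_of_nonneg (by exact_mod_cast hx0)
    rw [hC]
    linarith
  have hdist : (X.dist v0 x : ℝ) ≤ α * (C + β) := by
    have : α⁻¹ * (X.dist v0 x : ℝ) ≤ C + β := by linarith
    calc (X.dist v0 x : ℝ) = α * (α⁻¹ * (X.dist v0 x : ℝ)) := by
          field_simp
      _ ≤ α * (C + β) := by
          apply mul_le_mul_of_nonneg_left this (le_of_lt hα0)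
  have : (X.dist v0 x : ℝ) ≤ n := le_trans hdist hn
  exact_mod_cast this
end

section
/- Let X be a connected, locally finite simple graph with vertex set V and graph distance d, let ℓ : ℤ → V be a bi-infinite geodesic, and let m ∈ ℕ be such that for every x ∈ V there exists i ∈ ℤ with d(x, ℓ(i)) ≤ m. If A ⊆ V is infinite, its complement V \ A is infinite, and its boundary ∂A is finite, then A contains exactly one end of ℓ: exactly one of the following holds — (there exists N with ℓ(i) ∈ A for all i ≥ N) or (there exists N with ℓ(i) ∈ A for all i ≤ −N). -/
/-!
A geodesic has adjacent consecutive vertices and is injective, so only finitely many of its steps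
touch the finite frontier of `A` (the vertices with a neighbour on the other side of `A`); hence
each end of `ℓ` eventually stays in `A` or eventually stays out of it. If both ends stay in `A`,
every vertex `x ∉ A` lies within `m` of some `ℓ i`: either one of the finitely many `ℓ i ∉ A`, or
some `ℓ i ∈ A`, and then a shortest path from `x` to `ℓ i` meets the frontier within distance `m`
of `x`. Balls are finite by local finiteness, so `Aᶜ` would be finite. Exchanging `A` and `Aᶜ`
rules out that both ends avoid `A`.
-/

open Filter Set

theorem Int.eventually_or_eventually_not_atTop_of_eventually_succ_iff {p : ℤ → Prop}
    (h : ∀ᶠ i in atTop, (p (i + 1) ↔ p i)) :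
    (∀ᶠ i in atTop, p i) ∨ ∀ᶠ i in atTop, ¬p i := by
  obtain ⟨N, hN⟩ := eventually_atTop.mp h
  have hconst : ∀ i ≥ N, (p i ↔ p N) := by
    intro i hi
    induction i, hi using Int.leInduction with
    | base => rfl
    | succ j hj ih => exact (hN j hj).trans ih
  by_cases hpN : p N
  · exact .inl (eventually_atTop.mpr ⟨N, fun i hi => (hconst i hi).mpr hpN⟩)
  · exact .inr (eventually_atTop.mpr ⟨N, fun i hi => mt (hconst i hi).mp hpN⟩)

theorem Int.eventually_or_eventually_not_atBot_of_eventually_succ_iff {p : ℤ → Prop}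
    (h : ∀ᶠ i in atBot, (p (i + 1) ↔ p i)) :
    (∀ᶠ i in atBot, p i) ∨ ∀ᶠ i in atBot, ¬p i := by
  obtain ⟨N, hN⟩ := eventually_atBot.mp h
  have hconst : ∀ i ≤ N, (p i ↔ p N) := by
    intro i hi
    induction i, hi using Int.leInductionDown with
    | base => rfl
    | pred j hj ih =>
      have hstep := hN (j - 1) (by omega)
      rw [sub_add_cancel] at hstep
      exact hstep.symm.trans ih
  by_cases hpN : p N
  · exact .inl (eventually_atBot.mpr ⟨N, fun i hi => (hconst i hi).mpr hpN⟩)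
  · exact .inr (eventually_atBot.mpr ⟨N, fun i hi => mt (hconst i hi).mp hpN⟩)

namespace SimpleGraph

variable {V : Type*} (G : SimpleGraph V)

def innerBoundary (A : Set V) : Set V := {x ∈ A | ∃ y ∉ A, G.Adj x y}

def vertexFrontier (A : Set V) : Set V := G.innerBoundary A ∪ G.innerBoundary Aᶜ

def IsBiInfiniteGeodesic (ℓ : ℤ → V) : Prop := ∀ i j, (G.dist (ℓ i) (ℓ j) : ℤ) = |i - j|

variable {G}

theorem vertexFrontier_compl (A : Set V) : G.vertexFrontier Aᶜ = G.vertexFrontier A := by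
  rw [vertexFrontier, vertexFrontier, compl_compl, union_comm]

theorem mem_vertexFrontier_of_adj {A : Set V} {x y : V} (h : G.Adj x y) (hxy : x ∈ A ↔ y ∉ A) :
    x ∈ G.vertexFrontier A := by
  by_cases hx : x ∈ A
  · exact .inl ⟨hx, y, hxy.mp hx, h⟩
  · exact .inr ⟨hx, y, not_not.mpr (by tauto), h⟩

theorem finite_innerBoundary_compl (hlf : ∀ v, (G.neighborSet v).Finite) {A : Set V}
    (hA : (G.innerBoundary A).Finite) : (G.innerBoundary Aᶜ).Finite := by
  refine (hA.biUnion fun b _ => hlf b).subset ?_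
  rintro x ⟨hx, y, hy, hxy⟩
  exact mem_biUnion ⟨not_not.mp hy, x, hx, hxy.symm⟩ hxy.symm

theorem finite_vertexFrontier (hlf : ∀ v, (G.neighborSet v).Finite) {A : Set V}
    (hA : (G.innerBoundary A).Finite) : (G.vertexFrontier A).Finite :=
  hA.union (finite_innerBoundary_compl hlf hA)

theorem finite_setOf_exists_walk_length_le (hlf : ∀ v, (G.neighborSet v).Finite) (n : ℕ)
    (v : V) :
    {x | ∃ p : G.Walk v x, p.length ≤ n}.Finite := by
  induction n generalizing v with
  | zero =>
    refine (finite_singleton v).subset ?_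
    rintro x ⟨p, hp⟩
    cases p with
    | nil => rfl
    | cons => simp at hp
  | succ n ih =>
    refine ((finite_singleton v).union ((hlf v).biUnion fun w _ => ih w)).subset ?_
    rintro x ⟨p, hp⟩
    cases p with
    | nil => exact .inl rfl
    | cons h q => exact .inr (mem_biUnion h ⟨q, by simpa using hp⟩)

theorem Connected.finite_setOf_dist_le (hconn : G.Connected)
    (hlf : ∀ v, (G.neighborSet v).Finite) (n : ℕ) (v : V) :
    {x | G.dist v x ≤ n}.Finite := by
  refine (finite_setOf_exists_walk_length_le hlf n v).subset fun x hx => ?_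
  obtain ⟨p, hp⟩ := hconn.exists_walk_length_eq_dist v x
  exact ⟨p, hp ▸ hx⟩

theorem Walk.exists_mem_vertexFrontier_dist_le {A : Set V} {x y : V} (p : G.Walk x y)
    (hxy : x ∈ A ↔ y ∉ A) : ∃ b ∈ G.vertexFrontier A, G.dist x b ≤ p.length := by
  induction p with
  | nil => tauto
  | @cons x w y h q ih =>
    by_cases hxw : x ∈ A ↔ w ∉ A
    · exact ⟨x, mem_vertexFrontier_of_adj h hxw, by simp⟩
    · obtain ⟨b, hb, hwb⟩ := ih (by tauto)
      refine ⟨b, hb, ?_⟩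
      calc G.dist x b ≤ G.dist x w + G.dist w b := h.reachable.dist_triangle_left b
        _ ≤ 1 + q.length := by rw [dist_eq_one_iff_adj.mpr h]; omega
        _ = (q.cons h).length := by simp [add_comm]

theorem Connected.finite_compl_of_eventually_cofinite_mem (hconn : G.Connected)
    (hlf : ∀ v, (G.neighborSet v).Finite) {ι : Type*} {ℓ : ι → V} {m : ℕ}
    (hm : ∀ x, ∃ i, G.dist x (ℓ i) ≤ m) {A : Set V} (hA : (G.vertexFrontier A).Finite)
    (hℓA : ∀ᶠ i in cofinite, ℓ i ∈ A) : Aᶜ.Finite := by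
  refine ((hA.union (hℓA.image ℓ)).biUnion fun k _ => hconn.finite_setOf_dist_le hlf m k).subset
    fun x hx => ?_
  obtain ⟨i, hi⟩ := hm x
  by_cases hiA : ℓ i ∈ A
  · obtain ⟨p, hp⟩ := hconn.exists_walk_length_eq_dist x (ℓ i)
    obtain ⟨b, hb, hxb⟩ := p.exists_mem_vertexFrontier_dist_le (by tauto)
    exact mem_biUnion (.inl hb) (show G.dist b x ≤ m by rw [dist_comm]; omega)
  · exact mem_biUnion (.inr ⟨i, hiA, rfl⟩) (show G.dist (ℓ i) x ≤ m by rwa [dist_comm])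

namespace IsBiInfiniteGeodesic

variable {ℓ : ℤ → V}

theorem injective (hℓ : G.IsBiInfiniteGeodesic ℓ) : Function.Injective ℓ := fun i j hij => by
  have := hℓ i j
  rw [hij, dist_self, Nat.cast_zero, eq_comm, abs_eq_zero, sub_eq_zero] at this
  exact this

theorem adj_succ (hℓ : G.IsBiInfiniteGeodesic ℓ) (i : ℤ) : G.Adj (ℓ i) (ℓ (i + 1)) := by
  rw [← dist_eq_one_iff_adj, ← Nat.cast_inj (R := ℤ), hℓ]
  simp

theorem eventually_mem_succ_iff (hℓ : G.IsBiInfiniteGeodesic ℓ) {A : Set V}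
    (hA : (G.vertexFrontier A).Finite) :
    ∀ᶠ i in cofinite, (ℓ (i + 1) ∈ A ↔ ℓ i ∈ A) := by
  refine eventually_cofinite.mpr ((hA.preimage hℓ.injective.injOn).subset fun i hi => ?_)
  exact mem_vertexFrontier_of_adj (hℓ.adj_succ i) (by rw [mem_ofPred_eq] at hi; tauto)

end IsBiInfiniteGeodesic

end SimpleGraph

open SimpleGraph in
/-- In a connected, locally finite simple graph with a bi-infinite geodesic
`ℓ` such that every vertex is within distance `m` of `ℓ`, a set `A` with infinite
complement which is itself infinite and has finite boundary contains exactly one end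
of `ℓ`. -/
theorem coinfinite_set_contains_exactly_one_end {V : Type*} (X : SimpleGraph V)
    (hconn : X.Connected) (hlf : ∀ v : V, (X.neighborSet v).Finite)
    (ℓ : ℤ → V) (hgeo : ∀ i j : ℤ, (X.dist (ℓ i) (ℓ j) : ℤ) = |i - j|)
    (m : ℕ) (hm : ∀ x : V, ∃ i : ℤ, X.dist x (ℓ i) ≤ m)
    (A : Set V) (hA : A.Infinite) (hAc : (Aᶜ : Set V).Infinite)
    (hbd : {x ∈ A | ∃ y ∉ A, X.Adj x y}.Finite) :
    Xor' (∃ N : ℤ, ∀ i ≥ N, ℓ i ∈ A) (∃ N : ℤ, ∀ i ≤ -N, ℓ i ∈ A) := by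
  have hℓ : X.IsBiInfiniteGeodesic ℓ := hgeo
  have hF : (X.vertexFrontier A).Finite := finite_vertexFrontier hlf hbd
  have hsteps := hℓ.eventually_mem_succ_iff hF
  have htop := Int.eventually_or_eventually_not_atTop_of_eventually_succ_iff (p := (ℓ · ∈ A))
    (hsteps.filter_mono atTop_le_cofinite)
  have hbot := Int.eventually_or_eventually_not_atBot_of_eventually_succ_iff (p := (ℓ · ∈ A))
    (hsteps.filter_mono atBot_le_cofinite)
  have hcompl {B : Set V} (hBF : (X.vertexFrontier B).Finite) (hBtop : ∀ᶠ i in atTop, ℓ i ∈ B)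
      (hBbot : ∀ᶠ i in atBot, ℓ i ∈ B) : Bᶜ.Finite :=
    hconn.finite_compl_of_eventually_cofinite_mem hlf hm hBF
      (Int.cofinite_eq ▸ eventually_sup.mpr ⟨hBbot, hBtop⟩)
  have hbot_iff : (∃ N : ℤ, ∀ i ≤ -N, ℓ i ∈ A) ↔ ∀ᶠ i in atBot, ℓ i ∈ A :=
    (eventually_atBot.trans
      ⟨fun ⟨a, ha⟩ => ⟨-a, by simpa using ha⟩, fun ⟨N, hN⟩ => ⟨-N, hN⟩⟩).symm
  rw [← eventually_atTop, hbot_iff]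
  rcases htop with hT | hT <;> rcases hbot with hB | hB
  · exact (hAc (hcompl hF hT hB)).elim
  · exact .inl ⟨hT, not_eventually.mpr hB.frequently⟩
  · exact .inr ⟨hB, not_eventually.mpr hT.frequently⟩
  · exact (hA (compl_compl A ▸ hcompl (vertexFrontier_compl A ▸ hF) hT hB)).elim
end
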